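/- arXiv:math/0006202 — 3 statements merged into one kernel-verified Lean document; each statement's English description precedes it below -/
import Mathlib

section
/- For each x in the positive braid monoid B_n^+, the entries of the matrix of the Krammer action of x on V (over R = R[t,t^{-1}] with 0 < q < 1 real) lie in R_{≥0} + tR[t]; equivalently, the action of every positive braid preserves the set W = ⊕_{i<j} (R_{≥0} + tR[t]) x_{i,j}. -/
open LaurentPolynomial

def braidRels (n : ℕ) : Set (FreeGroup (Fin n)) :=
  {r | (∃ i j : Fin n, (i : ℕ) + 2 ≤ (j : ℕ) ∧
          r = .of i * .of j * (.of i)⁻¹ * (.of j)⁻¹) ∨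
       (∃ i j : Fin n, (j : ℕ) = (i : ℕ) + 1 ∧
          r = .of i * .of j * .of i * (.of j * .of i * .of j)⁻¹)}

abbrev BraidGroup (n : ℕ) : Type := PresentedGroup (braidRels n)

def Ref (n : ℕ) : Type := {p : ℕ × ℕ // 1 ≤ p.1 ∧ p.1 < p.2 ∧ p.2 ≤ n}

instance (n : ℕ) : DecidableEq (Ref n) := fun a b =>
  decidable_of_iff (a.val = b.val) Subtype.ext_iff.symm

def krammerCoeff {R : Type*} [CommRing R] (q t : R) (k i j : ℕ) (p : ℕ × ℕ) : R :=
  if k + 1 < i ∨ j < k then (if p = (i, j) then 1 else 0)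
  else if i = k + 1 then (if p = (k, j) then 1 else if p = (i, j) then 1 - q else 0)
  else if k = i ∧ i + 1 < j then
    (if p = (i, i + 1) then t * q * (q - 1) else if p = (i + 1, j) then q else 0)
  else if k = i ∧ j = i + 1 then (if p = (i, j) then t * q ^ 2 else 0)
  else if i < k ∧ k + 1 < j then
    (if p = (i, j) then 1 else if p = (k, k + 1) then t * q ^ (k - i) * (q - 1) ^ 2 else 0)
  else if k + 1 = j then
    (if p = (i, k) then 1 else if p = (k, j) then t * q ^ (j - i) * (q - 1) else 0)
  else (if p = (i, j) then 1 - q else if p = (i, j + 1) then q else 0)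

/-- The set `ℝ_{≥0} + t·ℝ[t]` of Laurent polynomials with no negative powers of `t` and
nonnegative constant term. -/
def nonnegConst : Set (LaurentPolynomial ℝ) :=
  {p | ∃ f : Polynomial ℝ, 0 ≤ f.coeff 0 ∧ Polynomial.toLaurent f = p}

/-!
Every entry of the Krammer matrix of `σ_k` is a polynomial in `t` whose value at `t = 0` is
`0`, `1`, `q` or `1 - q`, hence lies in `ℝ_{≥0} + tℝ[t]` when `0 ≤ q ≤ 1`. That set is a
subsemiring (the image of the polynomials with nonnegative constant coefficient), so a matrix
with entries in it maps `W` into `W`; and the endomorphisms mapping `W` into itself form a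
monoid, which therefore contains all positive braids.
-/

instance (n : ℕ) : Finite (Ref n) :=
  Set.Finite.to_subtype <| ((Set.finite_Iic n).prod (Set.finite_Iic n)).subset
    fun _ ⟨_, h, h'⟩ => ⟨by simp only [Set.mem_Iic]; omega, h'⟩

theorem map_krammerCoeff {R S : Type*} [CommRing R] [CommRing S] (f : R →+* S) (q t : R)
    (k i j : ℕ) (p : ℕ × ℕ) :
    f (krammerCoeff q t k i j p) = krammerCoeff (f q) (f t) k i j p := by
  unfold krammerCoeff
  split_ifs <;> simp

theorem krammerCoeff_zero_nonneg {q : ℝ} (hq : 0 ≤ q) (hq1 : q ≤ 1) (k i j : ℕ) (p : ℕ × ℕ) :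
    0 ≤ krammerCoeff q 0 k i j p := by
  unfold krammerCoeff
  split_ifs <;> simp [hq, hq1]

theorem krammerCoeff_mem_nonnegConst {q : ℝ} (hq : 0 ≤ q) (hq1 : q ≤ 1) (k i j : ℕ)
    (p : ℕ × ℕ) : krammerCoeff (C q) (T 1) k i j p ∈ nonnegConst := by
  refine ⟨krammerCoeff (Polynomial.C q) Polynomial.X k i j p, ?_, ?_⟩
  · rw [Polynomial.coeff_zero_eq_eval_zero, ← Polynomial.coe_evalRingHom, map_krammerCoeff]
    simpa using krammerCoeff_zero_nonneg hq hq1 k i j p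
  · rw [map_krammerCoeff, Polynomial.toLaurent_C, Polynomial.toLaurent_X]

noncomputable def nonnegConstSubsemiring : Subsemiring (LaurentPolynomial ℝ) :=
  ((Subsemiring.nonneg ℝ).comap Polynomial.constantCoeff).map Polynomial.toLaurent

theorem coe_nonnegConstSubsemiring :
    (nonnegConstSubsemiring : Set (LaurentPolynomial ℝ)) = nonnegConst := by
  ext p
  simp [nonnegConstSubsemiring, nonnegConst]

def Module.End.mapsToSubmonoid {R M : Type*} [Semiring R] [AddCommMonoid M] [Module R M]
    (s : Set M) : Submonoid (Module.End R M) where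
  carrier := {f | Set.MapsTo f s s}
  one_mem' := Set.mapsTo_id s
  mul_mem' hf hg := hf.comp hg

theorem LinearMap.mapsTo_pi_of_single_mem {R ι : Type*} [CommSemiring R] [Finite ι]
    [DecidableEq ι] (S : Subsemiring R) (f : (ι → R) →ₗ[R] ι → R)
    (hf : ∀ s r, f (Pi.single s 1) r ∈ S) :
    Set.MapsTo f (Set.univ.pi fun _ => S) (Set.univ.pi fun _ => S) := by
  have := Fintype.ofFinite ι
  intro v hv r _
  rw [← LinearMap.toMatrix'_mulVec, Matrix.mulVec, dotProduct]
  exact sum_mem fun s _ => mul_mem (hf s r) (hv s trivial)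

/-- For the Krammer representation of `B_{n+1}` over `ℝ[t,t⁻¹]` with `q` a real number,
`0 < q < 1`, every element of the positive braid monoid `B_{n+1}^+` (the submonoid generated
by the `σ_k`) maps the set `W = ⊕_{i<j} (ℝ_{≥0} + tℝ[t]) x_{i,j}` into itself. -/
theorem krammer_positive_braids_preserve_W (n : ℕ) (q₀ : ℝ) (hq : 0 < q₀) (hq1 : q₀ < 1)
    (ρ : BraidGroup n →* LinearMap.GeneralLinearGroup (LaurentPolynomial ℝ)
      (Ref (n + 1) → LaurentPolynomial ℝ))
    (hρ : ∀ (k : Fin n) (s : Ref (n + 1)),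
      ((ρ (PresentedGroup.of k) : (Ref (n + 1) → LaurentPolynomial ℝ) →ₗ[LaurentPolynomial ℝ]
          (Ref (n + 1) → LaurentPolynomial ℝ)) (Pi.single s 1))
        = fun r : Ref (n + 1) =>
            krammerCoeff (C q₀) (T 1) ((k : ℕ) + 1) s.val.1 s.val.2 r.val) :
    ∀ x ∈ Submonoid.closure (Set.range fun k : Fin n => ρ (PresentedGroup.of k)),
      ∀ v : Ref (n + 1) → LaurentPolynomial ℝ, (∀ r, v r ∈ nonnegConst) →
        ∀ r, ((x : (Ref (n + 1) → LaurentPolynomial ℝ) →ₗ[LaurentPolynomial ℝ]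
          (Ref (n + 1) → LaurentPolynomial ℝ)) v) r ∈ nonnegConst := by
  set W := Set.univ.pi fun _ : Ref (n + 1) => nonnegConst
  have generators_mapsTo : Set.range (fun k : Fin n => ρ (PresentedGroup.of k)) ⊆
      ((Module.End.mapsToSubmonoid W).comap
        (Units.coeHom (Module.End (LaurentPolynomial ℝ) _)) : Set _) := by
    rintro _ ⟨k, rfl⟩
    have entries_mem (s r : Ref (n + 1)) :
        (ρ (PresentedGroup.of k)).val (Pi.single s 1) r ∈ nonnegConstSubsemiring := by
      rw [hρ, ← SetLike.mem_coe, coe_nonnegConstSubsemiring]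
      exact krammerCoeff_mem_nonnegConst hq.le hq1.le _ _ _ _
    have := LinearMap.mapsTo_pi_of_single_mem _ _ entries_mem
    rwa [coe_nonnegConstSubsemiring] at this
  intro x hx v hv r
  exact Submonoid.closure_le.mpr generators_mapsTo hx (fun r _ => hv r) r trivial
end

section
/- The canonical section of the length function: there is a unique set-theoretic map r : S_n → B_n such that r(s_i) = σ_i for all i and r(xy) = r(x)r(y) whenever |xy| = |x| + |y|, where |·| is the word length in S_n with respect to the transpositions s_1,...,s_{n-1}. -/
/-- The adjacent transposition `s_i = (i, i+1)` in `S_{n+1}`. -/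
def adjTransposition (n : ℕ) (i : Fin n) : Equiv.Perm (Fin (n + 1)) :=
  Equiv.swap i.castSucc i.succ

/-- The word length of a permutation with respect to the adjacent transpositions. -/
noncomputable def wordLen (n : ℕ) (x : Equiv.Perm (Fin (n + 1))) : ℕ :=
  sInf {k | ∃ w : List (Fin n), w.length = k ∧ (w.map (adjTransposition n)).prod = x}

/-!
The section is built by peeling off descents: `r y = r (y * s i) * σ i` for a chosen descent `i`
of `y`, by recursion on the number of inversions. The value does not depend on the chosen descent:
for two descents `i ≠ j` of `y`, peeling further reduces both `r (y * s i) * σ i` and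
`r (y * s j) * σ j` to the same element times `σ i σ j = σ j σ i` when `|i - j| ≥ 2`, or
times `σ i σ j σ i = σ j σ i σ j` when `|i - j| = 1` (Matsumoto's argument in type A). Since the
word length is the number of inversions, a length-additive product `x * y` is obtained from `x` by
right multiplications at ascents, which gives multiplicativity; any `r` with the two properties
obeys the same peeling rule, which gives uniqueness.
-/

open Equiv Finset

variable {n : ℕ}

local notation "s" => adjTransposition _

lemma val_adjTransposition_apply (i : Fin n) (k : Fin (n + 1)) :
    (s i k : ℕ) =
      if (k : ℕ) = i then (i : ℕ) + 1 else if (k : ℕ) = i + 1 then (i : ℕ) else k := by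
  simp only [adjTransposition, swap_apply_def, Fin.ext_iff, Fin.val_castSucc, Fin.val_succ]
  split_ifs <;> simp_all

lemma adjTransposition_apply_of_val_ne {i : Fin n} {k : Fin (n + 1)} (h₁ : (k : ℕ) ≠ i)
    (h₂ : (k : ℕ) ≠ i + 1) : s i k = k :=
  Fin.ext (by rw [val_adjTransposition_apply, if_neg h₁, if_neg h₂])

lemma adjTransposition_apply_lt_apply_iff {i : Fin n} {a b : Fin (n + 1)}
    (h : ¬(a = i.succ ∧ b = i.castSucc)) :
    s i a < s i b ↔ a < b ∧ ¬(a = i.castSucc ∧ b = i.succ) := by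
  simp only [Fin.lt_def, Fin.ext_iff, val_adjTransposition_apply, Fin.val_castSucc,
    Fin.val_succ] at h ⊢
  split_ifs <;> omega

lemma adjTransposition_mul_self (i : Fin n) : s i * s i = 1 :=
  swap_mul_self _ _

lemma adjTransposition_comm {i j : Fin n} (h : (i : ℕ) + 2 ≤ j) : s i * s j = s j * s i := by
  ext k
  simp only [Perm.mul_apply, val_adjTransposition_apply]
  split_ifs <;> omega

lemma adjTransposition_braid {i j : Fin n} (h : (j : ℕ) = i + 1) :
    s i * s j * s i = s j * s i * s j := by
  have hb : i.succ = j.castSucc := Fin.ext (by simp [h])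
  have hac : i.castSucc ≠ j.succ := by simp [Fin.ext_iff, h]; omega
  have hab : i.castSucc ≠ i.succ := Fin.castSucc_lt_succ.ne
  have hbc : j.castSucc ≠ j.succ := Fin.castSucc_lt_succ.ne
  simp only [adjTransposition, hb] at hab ⊢
  rw [swap_mul_swap_mul_swap hab hac, swap_comm i.castSucc, swap_comm j.castSucc j.succ,
    swap_mul_swap_mul_swap hbc.symm hac.symm, swap_comm]

-- `x i.succ < x i.castSucc` says that `i` is a right descent of `x`: `x * s i` is shorter.
lemma exists_descent_of_ne_one {x : Perm (Fin (n + 1))} (hx : x ≠ 1) :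
    ∃ i : Fin n, x i.succ < x i.castSucc := by
  by_contra! h
  have hmono : StrictMono x := Fin.strictMono_iff_lt_succ.2 fun i =>
    (h i).lt_of_ne (x.injective.ne Fin.castSucc_lt_succ.ne)
  exact hx (Equiv.ext fun _ => hmono.apply_eq)

def inversions (x : Perm (Fin (n + 1))) : Finset (Fin (n + 1) × Fin (n + 1)) :=
  {p | p.1 < p.2 ∧ x p.2 < x p.1}

def invCount (x : Perm (Fin (n + 1))) : ℕ := #(inversions x)

lemma invCount_one : invCount (1 : Perm (Fin (n + 1))) = 0 := by
  simp only [invCount, inversions, card_eq_zero, Finset.filter_eq_empty_iff]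
  exact fun _ _ h => h.1.asymm h.2

lemma inversions_erase_of_descent {x : Perm (Fin (n + 1))} {i : Fin n}
    (h : x i.succ < x i.castSucc) :
    (inversions x).erase (i.castSucc, i.succ) =
      (inversions (x * s i)).map (prodCongr (s i) (s i)).toEmbedding := by
  ext ⟨a, b⟩
  rw [mem_erase, mem_map_equiv]
  simp only [inversions, Finset.mem_filter, mem_univ, true_and]
  simp only [ne_eq, Prod.mk.injEq, prodCongr_symm, prodCongr_apply, Prod.map, Perm.mul_apply,
    show (s i).symm = s i from symm_swap _ _, show ∀ k, s i (s i k) = k from swap_apply_self _ _]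
  by_cases hab : a = i.succ ∧ b = i.castSucc
  · obtain ⟨rfl, rfl⟩ := hab
    simp [h.not_gt, Fin.castSucc_lt_succ.not_gt]
  · rw [adjTransposition_apply_lt_apply_iff hab]
    tauto

lemma invCount_mul_of_descent {x : Perm (Fin (n + 1))} {i : Fin n}
    (h : x i.succ < x i.castSucc) : invCount (x * s i) + 1 = invCount x := by
  have hmem : (i.castSucc, i.succ) ∈ inversions x := by simp [inversions, h]
  rw [invCount, invCount, ← card_map, ← inversions_erase_of_descent h, card_erase_add_one hmem]

lemma invCount_mul_lt {x : Perm (Fin (n + 1))} {i : Fin n} (h : x i.succ < x i.castSucc) :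
    invCount (x * s i) < invCount x := by
  have := invCount_mul_of_descent h
  omega

lemma invCount_mul_of_ascent {x : Perm (Fin (n + 1))} {i : Fin n}
    (h : x i.castSucc < x i.succ) : invCount (x * s i) = invCount x + 1 := by
  have hdesc : (x * s i) i.succ < (x * s i) i.castSucc := by
    simpa [adjTransposition] using h
  rw [← invCount_mul_of_descent hdesc, mul_assoc, adjTransposition_mul_self, mul_one]

lemma invCount_mul_adjTransposition_le (x : Perm (Fin (n + 1))) (i : Fin n) :
    invCount (x * s i) ≤ invCount x + 1 := by
  rcases lt_or_gt_of_ne (x.injective.ne (Fin.castSucc_lt_succ (i := i)).ne) with h | h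
  · exact (invCount_mul_of_ascent h).le
  · exact (invCount_mul_lt h).le.trans (Nat.le_succ _)

lemma descent_of_invCount_mul_lt {x : Perm (Fin (n + 1))} {i : Fin n}
    (h : invCount (x * s i) < invCount x) : x i.succ < x i.castSucc := by
  refine (lt_or_gt_of_ne (x.injective.ne (Fin.castSucc_lt_succ (i := i)).ne)).resolve_left ?_
  intro hasc
  have := invCount_mul_of_ascent hasc
  omega

@[elab_as_elim]
lemma descent_induction {P : Perm (Fin (n + 1)) → Prop} (one : P 1)
    (mul : ∀ x i, x i.succ < x i.castSucc → P (x * s i) → P x) (x : Perm (Fin (n + 1))) :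
    P x := by
  induction hN : invCount x using Nat.strong_induction_on generalizing x with
  | _ N ih =>
    by_cases hx : x = 1
    · exact hx ▸ one
    · obtain ⟨i, hi⟩ := exists_descent_of_ne_one hx
      exact mul x i hi (ih _ (hN ▸ invCount_mul_lt hi) _ rfl)

lemma exists_word_length_eq_invCount (x : Perm (Fin (n + 1))) :
    ∃ w : List (Fin n), w.length = invCount x ∧ (w.map s).prod = x := by
  induction x using descent_induction with
  | one => exact ⟨[], by simp [invCount_one]⟩
  | mul x i hi ih =>
    obtain ⟨w, hlen, hprod⟩ := ih
    refine ⟨w ++ [i], ?_, ?_⟩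
    · simp [hlen, ← invCount_mul_of_descent hi]
    · simp [hprod, mul_assoc, adjTransposition_mul_self]

lemma invCount_mul_prod_le (x : Perm (Fin (n + 1))) (w : List (Fin n)) :
    invCount (x * (w.map s).prod) ≤ invCount x + w.length := by
  induction w generalizing x with
  | nil => simp
  | cons i w ih =>
    rw [List.map_cons, List.prod_cons, ← mul_assoc, List.length_cons]
    have := invCount_mul_adjTransposition_le x i
    have := ih (x * s i)
    omega

lemma invCount_mul_le (x y : Perm (Fin (n + 1))) :
    invCount (x * y) ≤ invCount x + invCount y := by
  obtain ⟨w, hlen, rfl⟩ := exists_word_length_eq_invCount y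
  simpa [hlen] using invCount_mul_prod_le x w

lemma wordLen_eq_invCount : wordLen n = invCount := by
  funext x
  obtain ⟨w, hlen, hprod⟩ := exists_word_length_eq_invCount x
  refine le_antisymm (Nat.sInf_le ⟨w, hlen, hprod⟩) (le_csInf ⟨_, w, hlen, hprod⟩ ?_)
  rintro _ ⟨v, rfl, rfl⟩
  simpa [invCount_one] using invCount_mul_prod_le 1 v

section CanonicalSection

variable {M : Type*} [Monoid M]

structure SatisfiesBraidRelations (g : Fin n → M) : Prop where
  comm : ∀ i j : Fin n, (i : ℕ) + 2 ≤ j → g i * g j = g j * g i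
  braid : ∀ i j : Fin n, (j : ℕ) = i + 1 → g i * g j * g i = g j * g i * g j

lemma satisfiesBraidRelations_of :
    SatisfiesBraidRelations (PresentedGroup.of : Fin n → BraidGroup n) where
  comm i j h := by
    have := PresentedGroup.one_of_mem (rels := braidRels n) (Or.inl ⟨i, j, h, rfl⟩)
    simp only [map_mul, map_inv] at this
    exact mul_inv_eq_iff_eq_mul.mp (mul_inv_eq_one.mp this)
  braid i j h := by
    have := PresentedGroup.one_of_mem (rels := braidRels n) (Or.inr ⟨i, j, h, rfl⟩)
    simp only [map_mul, map_inv] at this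
    exact mul_inv_eq_one.mp this

def PeelsBelow (g : Fin n → M) (N : ℕ) (f : Perm (Fin (n + 1)) → M) : Prop :=
  ∀ y i, invCount y < N → y i.succ < y i.castSucc → f y = f (y * s i) * g i

lemma descent_mul_of_far {y : Perm (Fin (n + 1))} {i j : Fin n}
    (hij : (i : ℕ) + 2 ≤ j ∨ (j : ℕ) + 2 ≤ i) (h : y j.succ < y j.castSucc) :
    (y * s i) j.succ < (y * s i) j.castSucc := by
  rwa [Perm.mul_apply, Perm.mul_apply, adjTransposition_apply_of_val_ne,
    adjTransposition_apply_of_val_ne] <;> simp only [Fin.val_succ, Fin.val_castSucc] <;> omega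

variable {g : Fin n → M} {f : Perm (Fin (n + 1)) → M} {y : Perm (Fin (n + 1))}

lemma PeelsBelow.peel_eq_peel_of_far (hg : SatisfiesBraidRelations g)
    (hf : PeelsBelow g (invCount y) f) {i j : Fin n} (hi : y i.succ < y i.castSucc)
    (hj : y j.succ < y j.castSucc) (hij : (i : ℕ) + 2 ≤ j) :
    f (y * s i) * g i = f (y * s j) * g j := by
  have hperm : y * s i * s j = y * s j * s i := by
    rw [mul_assoc, adjTransposition_comm hij, ← mul_assoc]
  calc f (y * s i) * g i = f (y * s i * s j) * g j * g i := by
        rw [hf _ j (invCount_mul_lt hi) (descent_mul_of_far (.inl hij) hj)]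
    _ = f (y * s j * s i) * g i * g j := by
        rw [hperm, mul_assoc (f _), mul_assoc (f _), hg.comm i j hij]
    _ = f (y * s j) * g j := by
        rw [← hf _ i (invCount_mul_lt hj) (descent_mul_of_far (.inr hij) hi)]

lemma PeelsBelow.peel_eq_peel_of_adjacent (hg : SatisfiesBraidRelations g)
    (hf : PeelsBelow g (invCount y) f) {i j : Fin n} (hi : y i.succ < y i.castSucc)
    (hj : y j.succ < y j.castSucc) (hij : (j : ℕ) = i + 1) :
    f (y * s i) * g i = f (y * s j) * g j := by
  have hb : i.succ = j.castSucc := Fin.ext (by simp [hij])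
  have hac : i.castSucc ≠ j.succ := by simp [Fin.ext_iff, hij]; omega
  have hab : i.castSucc ≠ j.castSucc := hb ▸ Fin.castSucc_lt_succ.ne
  have hbc : j.castSucc ≠ j.succ := Fin.castSucc_lt_succ.ne
  have hi' : y j.castSucc < y i.castSucc := hb ▸ hi
  have hi₁ : (y * s i) j.succ < (y * s i) j.castSucc := by
    simpa [adjTransposition, hb, swap_apply_of_ne_of_ne, hac.symm, hbc.symm] using hj.trans hi'
  have hi₂ : (y * s i * s j) i.succ < (y * s i * s j) i.castSucc := by
    simpa [adjTransposition, hb, swap_apply_of_ne_of_ne, hac.symm, hbc.symm, hab, hac] using hj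
  have hj₁ : (y * s j) i.succ < (y * s j) i.castSucc := by
    simpa [adjTransposition, hb, swap_apply_of_ne_of_ne, hab, hac] using hj.trans hi'
  have hj₂ : (y * s j * s i) j.succ < (y * s j * s i) j.castSucc := by
    simpa [adjTransposition, hb, swap_apply_of_ne_of_ne, hab, hac, hac.symm, hbc.symm] using hi'
  have hperm : y * s i * s j * s i = y * s j * s i * s j := by
    simpa only [mul_assoc] using congrArg (y * ·) (adjTransposition_braid hij)
  calc f (y * s i) * g i
      = f (y * s i * s j * s i) * (g i * g j * g i) := by
        rw [hf _ j (invCount_mul_lt hi) hi₁,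
          hf _ i ((invCount_mul_lt hi₁).trans (invCount_mul_lt hi)) hi₂]
        simp only [mul_assoc]
    _ = f (y * s j * s i * s j) * (g j * g i * g j) := by rw [hperm, hg.braid i j hij]
    _ = f (y * s j) * g j := by
        rw [hf _ i (invCount_mul_lt hj) hj₁,
          hf _ j ((invCount_mul_lt hj₁).trans (invCount_mul_lt hj)) hj₂]
        simp only [mul_assoc]

lemma PeelsBelow.peel_eq_peel (hg : SatisfiesBraidRelations g)
    (hf : PeelsBelow g (invCount y) f) {i j : Fin n} (hi : y i.succ < y i.castSucc)
    (hj : y j.succ < y j.castSucc) : f (y * s i) * g i = f (y * s j) * g j := by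
  rcases lt_trichotomy (i : ℕ) j with hij | hij | hij
  · by_cases hadj : (j : ℕ) = i + 1
    · exact hf.peel_eq_peel_of_adjacent hg hi hj hadj
    · exact hf.peel_eq_peel_of_far hg hi hj (by omega)
  · rw [Fin.ext hij]
  · by_cases hadj : (i : ℕ) = j + 1
    · exact (hf.peel_eq_peel_of_adjacent hg hj hi hadj).symm
    · exact (hf.peel_eq_peel_of_far hg hj hi (by omega)).symm

variable (g) in
noncomputable def canonicalSection (y : Perm (Fin (n + 1))) : M :=
  if h : ∃ i : Fin n, y i.succ < y i.castSucc then
    canonicalSection (y * s h.choose) * g h.choose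
  else 1
termination_by invCount y
decreasing_by exact invCount_mul_lt h.choose_spec

lemma canonicalSection_one : canonicalSection g 1 = 1 := by
  rw [canonicalSection, dif_neg (by simp [Fin.castSucc_lt_succ.le])]

lemma canonicalSection_of_descent (hg : SatisfiesBraidRelations g) (y : Perm (Fin (n + 1)))
    {i : Fin n} (hi : y i.succ < y i.castSucc) :
    canonicalSection g y = canonicalSection g (y * s i) * g i := by
  induction hN : invCount y using Nat.strong_induction_on generalizing y i with
  | _ N ih =>
    have hex : ∃ d : Fin n, y d.succ < y d.castSucc := ⟨i, hi⟩
    rw [canonicalSection, dif_pos hex]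
    exact PeelsBelow.peel_eq_peel hg (fun z k hz hk => ih _ (hN ▸ hz) z hk rfl) hex.choose_spec hi

lemma canonicalSection_adjTransposition (hg : SatisfiesBraidRelations g) (i : Fin n) :
    canonicalSection g (s i) = g i := by
  have hi : s i i.succ < s i i.castSucc := by simp [adjTransposition]
  rw [canonicalSection_of_descent hg _ hi, adjTransposition_mul_self, canonicalSection_one,
    one_mul]

lemma canonicalSection_mul (hg : SatisfiesBraidRelations g) (x y : Perm (Fin (n + 1)))
    (h : invCount (x * y) = invCount x + invCount y) :
    canonicalSection g (x * y) = canonicalSection g x * canonicalSection g y := by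
  induction y using descent_induction with
  | one => rw [mul_one, canonicalSection_one, mul_one]
  | mul y i hi ih =>
    have hy := invCount_mul_of_descent hi
    have hle := invCount_mul_le x (y * s i)
    have hxy : (x * y) i.succ < (x * y) i.castSucc :=
      descent_of_invCount_mul_lt (by rw [mul_assoc]; omega)
    have hadd : invCount (x * (y * s i)) = invCount x + invCount (y * s i) := by
      have := invCount_mul_of_descent hxy
      rw [mul_assoc] at this
      omega
    rw [canonicalSection_of_descent hg _ hxy, canonicalSection_of_descent hg y hi, mul_assoc,
      ih hadd, mul_assoc]

lemma eq_canonicalSection_of_mul (hg : SatisfiesBraidRelations g) (h₁ : f 1 = 1)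
    (hs : ∀ i, f (s i) = g i)
    (hmul : ∀ x y, invCount (x * y) = invCount x + invCount y → f (x * y) = f x * f y) :
    f = canonicalSection g := by
  funext x
  induction x using descent_induction with
  | one => rw [h₁, canonicalSection_one]
  | mul x i hi ih =>
    have hsplit : invCount (x * s i * s i) = invCount (x * s i) + invCount (s i) := by
      rw [mul_assoc, adjTransposition_mul_self, mul_one, ← invCount_mul_of_descent hi,
        ← one_mul (s i), invCount_mul_of_ascent (by simp), invCount_one]
    rw [canonicalSection_of_descent hg x hi, ← ih, ← hs, ← hmul _ _ hsplit, mul_assoc,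
      adjTransposition_mul_self, mul_one]

end CanonicalSection

/-- There is a unique set-theoretic section `r : S_{n+1} → B_{n+1}` of the canonical
projection such that `r(s_i) = σ_i` for all `i` and `r(xy) = r(x) r(y)` whenever
`|xy| = |x| + |y|` for the word length `|·|` in the adjacent transpositions. -/
theorem canonical_section_exists_unique (n : ℕ) :
    ∃! r : Equiv.Perm (Fin (n + 1)) → BraidGroup n,
      (∀ i : Fin n, r (adjTransposition n i) = PresentedGroup.of i) ∧
      (∀ x y : Equiv.Perm (Fin (n + 1)),
        wordLen n (x * y) = wordLen n x + wordLen n y → r (x * y) = r x * r y) := by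
  have hB := satisfiesBraidRelations_of (n := n)
  rw [wordLen_eq_invCount]
  refine ⟨canonicalSection PresentedGroup.of,
    ⟨canonicalSection_adjTransposition hB, canonicalSection_mul hB⟩, ?_⟩
  rintro f ⟨hs, hmul⟩
  refine eq_canonicalSection_of_mul hB ?_ hs hmul
  simpa using hmul 1 1 (by simp [invCount_one])
end

section
/- Every half-permutation contains a greatest inversion set: for every half-permutation A ⊆ Ref there exists a greatest subset A' ⊆ A (with respect to inclusion) such that A' = L(x) for some x ∈ S_n; i.e., the collection {B ⊆ A : B = L(x) for some x ∈ S_n} has a maximum element. -/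
def invSet {n : ℕ} (x : Equiv.Perm (Fin n)) : Set (Fin n × Fin n) :=
  {p | p.1 < p.2 ∧ x⁻¹ p.2 < x⁻¹ p.1}

namespace HalfPerm

variable {n : ℕ}

/-- Transitive closure of a set of pairs. -/
inductive Cl (S : Set (Fin n × Fin n)) : Fin n → Fin n → Prop
  | base {i j : Fin n} : (i, j) ∈ S → Cl S i j
  | trans {i j k : Fin n} : Cl S i j → Cl S j k → Cl S i k

lemma cl_lt {S : Set (Fin n × Fin n)} (hS : ∀ p ∈ S, p.1 < p.2) {i j : Fin n}
    (h : Cl S i j) : i < j := by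
  induction h with
  | base h => exact hS _ h
  | trans _ _ ih1 ih2 => exact ih1.trans ih2

lemma cl_subset {S A : Set (Fin n × Fin n)} (hSA : S ⊆ A)
    (hA : ∀ i j k : Fin n, (i, j) ∈ A → (j, k) ∈ A → (i, k) ∈ A) {i j : Fin n}
    (h : Cl S i j) : (i, j) ∈ A := by
  induction h with
  | base h => exact hSA h
  | trans _ _ ih1 ih2 => exact hA _ _ _ ih1 ih2

def CoClosed (B : Set (Fin n × Fin n)) : Prop :=
  ∀ i j k : Fin n, i < j → j < k → (i, k) ∈ B → (i, j) ∈ B ∨ (j, k) ∈ B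

lemma invSet_lt (x : Equiv.Perm (Fin n)) : ∀ p ∈ invSet x, p.1 < p.2 := fun _ hp => hp.1

lemma invSet_coClosed (x : Equiv.Perm (Fin n)) : CoClosed (invSet x) := by
  intro i j k hij hjk hik
  rcases lt_or_ge (x⁻¹ j) (x⁻¹ i) with h | h
  · exact Or.inl ⟨hij, h⟩
  · exact Or.inr ⟨hjk, lt_of_lt_of_le hik.2 h⟩

lemma cl_union_co {B C : Set (Fin n × Fin n)}
    (hBc : CoClosed B) (hCc : CoClosed C) {i k : Fin n}
    (h : Cl (B ∪ C) i k) :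
    ∀ j : Fin n, i < j → j < k → Cl (B ∪ C) i j ∨ Cl (B ∪ C) j k := by
  induction h with
  | base h =>
    intro j hij hjk
    rcases h with h | h
    · rcases hBc _ _ _ hij hjk h with h' | h'
      · exact Or.inl (Cl.base (Or.inl h'))
      · exact Or.inr (Cl.base (Or.inl h'))
    · rcases hCc _ _ _ hij hjk h with h' | h'
      · exact Or.inl (Cl.base (Or.inr h'))
      · exact Or.inr (Cl.base (Or.inr h'))
  | @trans a m b h1 h2 ih1 ih2 =>
    intro j hij hjk
    rcases lt_trichotomy j m with hjm | rfl | hmj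
    · rcases ih1 j hij hjm with h' | h'
      · exact Or.inl h'
      · exact Or.inr (h'.trans h2)
    · exact Or.inl h1
    · rcases ih2 j hmj hjk with h' | h'
      · exact Or.inl (h1.trans h')
      · exact Or.inr h'

lemma exists_perm_of_clopen {B : Set (Fin n × Fin n)}
    (hlt : ∀ p ∈ B, p.1 < p.2)
    (hcl : ∀ i j k : Fin n, (i, j) ∈ B → (j, k) ∈ B → (i, k) ∈ B)
    (hcc : CoClosed B) :
    ∃ x : Equiv.Perm (Fin n), invSet x = B := by
  classical
  set r : Fin n → Fin n → Prop := fun a b => (a < b ∧ (a, b) ∉ B) ∨ (b < a ∧ (b, a) ∈ B)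
    with hr
  have rirr : ∀ a, ¬ r a a := by
    intro a h; rcases h with ⟨h, _⟩ | ⟨h, _⟩ <;> exact lt_irrefl _ h
  have rtot : ∀ a b, a ≠ b → r a b ∨ r b a := by
    intro a b hab
    rcases lt_or_gt_of_ne hab with h | h
    · by_cases hB : (a, b) ∈ B
      · exact Or.inr (Or.inr ⟨h, hB⟩)
      · exact Or.inl (Or.inl ⟨h, hB⟩)
    · by_cases hB : (b, a) ∈ B
      · exact Or.inl (Or.inr ⟨h, hB⟩)
      · exact Or.inr (Or.inl ⟨h, hB⟩)
  have rtrans : ∀ a b c, r a b → r b c → r a c := by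
    intro a b c hab hbc
    rcases hab with ⟨h1, h2⟩ | ⟨h1, h2⟩ <;> rcases hbc with ⟨h3, h4⟩ | ⟨h3, h4⟩
    · refine Or.inl ⟨h1.trans h3, fun hac => ?_⟩
      rcases hcc a b c h1 h3 hac with h | h
      exacts [h2 h, h4 h]
    · rcases lt_trichotomy a c with h | rfl | h
      · exact Or.inl ⟨h, fun hac => h2 (hcl a c b hac h4)⟩
      · exact absurd h4 h2
      · refine Or.inr ⟨h, ?_⟩
        rcases hcc c a b h h1 h4 with h' | h'
        · exact h'
        · exact absurd h' h2
    · rcases lt_trichotomy a c with h | rfl | h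
      · exact Or.inl ⟨h, fun hac => h4 (hcl b a c h2 hac)⟩
      · exact absurd h2 h4
      · refine Or.inr ⟨h, ?_⟩
        rcases hcc b c a h3 h h2 with h' | h'
        · exact absurd h' h4
        · exact h'
    · exact Or.inr ⟨h3.trans h1, hcl c b a h4 h2⟩
  set g : Fin n → Fin n := fun a =>
    ⟨(Finset.univ.filter fun c => r c a).card, by
      have hsub : (Finset.univ.filter fun c => r c a) ⊆ Finset.univ.erase a := by
        intro c hc
        simp only [Finset.mem_filter] at hc
        refine Finset.mem_erase.mpr ⟨?_, Finset.mem_univ c⟩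
        rintro rfl; exact rirr _ hc.2
      calc (Finset.univ.filter fun c => r c a).card
          ≤ (Finset.univ.erase a).card := Finset.card_le_card hsub
        _ < Finset.univ.card := Finset.card_erase_lt_of_mem (Finset.mem_univ a)
        _ = n := Finset.card_fin n⟩ with hg
  have gmono : ∀ a b, r a b → g a < g b := by
    intro a b hab
    have hsub : (Finset.univ.filter fun c => r c a) ⊆ Finset.univ.filter fun c => r c b := by
      intro c hc
      simp only [Finset.mem_filter] at hc ⊢
      exact ⟨Finset.mem_univ c, rtrans c a b hc.2 hab⟩
    have hss : (Finset.univ.filter fun c => r c a) ⊂ Finset.univ.filter fun c => r c b := by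
      rw [Finset.ssubset_iff_of_subset hsub]
      refine ⟨a, ?_, ?_⟩
      · simp only [Finset.mem_filter]; exact ⟨Finset.mem_univ a, hab⟩
      · simp only [Finset.mem_filter, not_and]
        intro _; exact rirr a
    exact Fin.mk_lt_mk.mpr (Finset.card_lt_card hss)
  have ginj : Function.Injective g := by
    intro a b hab
    by_contra hne
    rcases rtot a b hne with h | h
    · exact absurd hab (ne_of_lt (gmono a b h))
    · exact absurd hab.symm (ne_of_lt (gmono b a h))
  set e : Equiv.Perm (Fin n) := Equiv.ofBijective g (Finite.injective_iff_bijective.mp ginj)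
    with he
  refine ⟨e.symm, ?_⟩
  have hinv : ∀ a, (e.symm)⁻¹ a = g a := by
    intro a
    rw [Equiv.Perm.inv_def, Equiv.symm_symm, he]
    rfl
  ext ⟨i, j⟩
  simp only [invSet, Set.mem_setOf_eq, hinv]
  constructor
  · rintro ⟨hij, hgj⟩
    have hji : r j i := by
      rcases rtot j i (ne_of_gt hij) with h | h
      · exact h
      · exact absurd hgj (not_lt_of_gt (gmono i j h))
    rcases hji with ⟨h, _⟩ | ⟨_, h⟩
    · exact absurd (hij.trans h) (lt_irrefl _)
    · exact h
  · intro hB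
    have hij : i < j := hlt _ hB
    exact ⟨hij, gmono j i (Or.inr ⟨hij, hB⟩)⟩

end HalfPerm

/-- Every half-permutation contains a greatest inversion set: if `A ⊆ Ref` (pairs `(i,j)`
with `i < j`) satisfies `(i,j), (j,k) ∈ A → (i,k) ∈ A`, then among the inversion sets `L(x)`
of permutations contained in `A` there is a greatest one with respect to inclusion. -/
theorem halfPermutation_greatest_braid (n : ℕ) (A : Set (Fin n × Fin n))
    (hRef : ∀ p ∈ A, p.1 < p.2)
    (hHalf : ∀ i j k : Fin n, (i, j) ∈ A → (j, k) ∈ A → (i, k) ∈ A) :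
    ∃ x : Equiv.Perm (Fin n), invSet x ⊆ A ∧
      ∀ y : Equiv.Perm (Fin n), invSet y ⊆ A → invSet y ⊆ invSet x := by
  classical
  have join : ∀ x y : Equiv.Perm (Fin n), invSet x ⊆ A → invSet y ⊆ A →
      ∃ z : Equiv.Perm (Fin n), invSet z ⊆ A ∧ invSet x ⊆ invSet z ∧ invSet y ⊆ invSet z := by
    intro x y hx hy
    set D : Set (Fin n × Fin n) := {p | HalfPerm.Cl (invSet x ∪ invSet y) p.1 p.2} with hD
    have hDlt : ∀ p ∈ D, p.1 < p.2 := fun p hp =>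
      HalfPerm.cl_lt (by rintro q (h | h); exacts [h.1, h.1]) hp
    have hDA : D ⊆ A := fun p hp =>
      HalfPerm.cl_subset (Set.union_subset hx hy) hHalf hp
    have hDcl : ∀ i j k : Fin n, (i, j) ∈ D → (j, k) ∈ D → (i, k) ∈ D :=
      fun _ _ _ h1 h2 => HalfPerm.Cl.trans h1 h2
    have hDcc : HalfPerm.CoClosed D := fun i j k hij hjk hik =>
      HalfPerm.cl_union_co (HalfPerm.invSet_coClosed x) (HalfPerm.invSet_coClosed y) hik j hij hjk
    obtain ⟨z, hz⟩ := HalfPerm.exists_perm_of_clopen hDlt hDcl hDcc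
    refine ⟨z, hz ▸ hDA, ?_, ?_⟩
    · rw [hz]; exact fun p hp => HalfPerm.Cl.base (Or.inl hp)
    · rw [hz]; exact fun p hp => HalfPerm.Cl.base (Or.inr hp)
  have hone : invSet (1 : Equiv.Perm (Fin n)) ⊆ A := by
    rintro p ⟨h1, h2⟩
    simp only [inv_one, Equiv.Perm.coe_one, id_eq] at h2
    exact absurd (h1.trans h2) (lt_irrefl _)
  obtain ⟨x, hxmem, hxmax⟩ := Finset.exists_max_image
      (Finset.univ.filter fun z : Equiv.Perm (Fin n) => invSet z ⊆ A)
      (fun z => (invSet z).ncard)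
      ⟨1, by simp only [Finset.mem_filter]; exact ⟨Finset.mem_univ _, hone⟩⟩
  simp only [Finset.mem_filter] at hxmem
  refine ⟨x, hxmem.2, fun y hy => ?_⟩
  obtain ⟨z, hzA, hxz, hyz⟩ := join x y hxmem.2 hy
  have hle : (invSet z).ncard ≤ (invSet x).ncard :=
    hxmax z (by simp only [Finset.mem_filter]; exact ⟨Finset.mem_univ _, hzA⟩)
  have hxeq : invSet x = invSet z :=
    Set.eq_of_subset_of_ncard_le hxz hle (Set.toFinite _)
  rw [hxeq]
  exact hyz
end
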